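/- arXiv:math/0102193 — 4 statements merged into one kernel-verified Lean document; each statement's English description precedes it below -/
import Mathlib

section
/- For every integer n ≥ 2, −(π²)/(2n²(n−1)) ≤ (−1 + cos(π/n))/(n−1) ≤ −π²/(2n³). -/
/-!
The lower bound is `1 - x ^ 2 / 2 ≤ cos x` at `x = π / n`. For the upper bound, the half-angle
formula turns `sin y ≥ y - y ^ 3 / 6` into `cos x ≤ 1 - x ^ 2 / 2 + x ^ 4 / 24`, and on `[0, π]` the
quartic term is at most `x ^ 3 / (2 * π)` because `π ^ 2 < 12`. At `x = π / n` this gives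
`1 - cos x ≥ x ^ 2 / 2 * (1 - 1 / n)`, which is the claimed bound after dividing by `n - 1`.
-/

namespace Real

lemma sq_sub_pow_four_div_three_le_sin_sq (y : ℝ) : y ^ 2 - y ^ 4 / 3 ≤ sin y ^ 2 := by
  have htaylor : |y| - |y| ^ 3 / 6 ≤ |sin y| := by
    have := abs_sub_sin_le y
    have := abs_sub_abs_le_abs_sub y (sin y)
    linarith
  rcases le_or_gt 0 (|y| - |y| ^ 3 / 6) with hpos | hneg
  · have hsq := pow_le_pow_left₀ hpos htaylor 2
    rw [sq_abs] at hsq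
    rw [← sq_abs y, ← (by decide : Even 4).pow_abs y]
    linarith [pow_nonneg (abs_nonneg y) 6]
  · nlinarith [sq_abs y, sq_nonneg (sin y), abs_nonneg y]

lemma cos_le_one_sub_sq_div_two_add_pow_four_div_24 (x : ℝ) :
    cos x ≤ 1 - x ^ 2 / 2 + x ^ 4 / 24 := by
  have hhalf := sin_sq_eq_half_sub (x / 2)
  rw [mul_div_cancel₀ x two_ne_zero] at hhalf
  linarith [sq_sub_pow_four_div_three_le_sin_sq (x / 2)]

lemma sq_div_two_mul_one_sub_div_pi_le_one_sub_cos {x : ℝ} (hx₀ : 0 ≤ x) (hxπ : x ≤ π) :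
    x ^ 2 / 2 * (1 - x / π) ≤ 1 - cos x := by
  have hπ₁₂ : x * π ≤ 12 := by nlinarith [pi_lt_d2, pi_pos]
  have hquartic : x ^ 4 / 24 ≤ x ^ 3 / (2 * π) := by
    rw [div_le_div_iff₀ (by norm_num) (by positivity)]
    nlinarith [pow_nonneg hx₀ 3]
  calc x ^ 2 / 2 * (1 - x / π) = x ^ 2 / 2 - x ^ 3 / (2 * π) := by field_simp
    _ ≤ x ^ 2 / 2 - x ^ 4 / 24 := by linarith
    _ ≤ 1 - cos x := by linarith [cos_le_one_sub_sq_div_two_add_pow_four_div_24 x]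

end Real

open Real

theorem contraction_rate_bounds (n : ℕ) (hn : 2 ≤ n) :
    -(Real.pi ^ 2) / (2 * (n : ℝ) ^ 2 * ((n : ℝ) - 1)) ≤
      (-1 + Real.cos (Real.pi / n)) / ((n : ℝ) - 1) ∧
    (-1 + Real.cos (Real.pi / n)) / ((n : ℝ) - 1) ≤ -Real.pi ^ 2 / (2 * (n : ℝ) ^ 3) := by
  have hn₂ : (2 : ℝ) ≤ n := by exact_mod_cast hn
  have hn₁ : (0 : ℝ) < n - 1 := by linarith
  have hx₀ : 0 ≤ π / n := by positivity
  have hxπ : π / n ≤ π := div_le_self pi_pos.le (by linarith)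
  constructor
  · calc -(π ^ 2) / (2 * (n : ℝ) ^ 2 * (n - 1)) = (-((π / n) ^ 2 / 2)) / (n - 1) := by
          field_simp
      _ ≤ (-1 + cos (π / n)) / (n - 1) := by
          gcongr
          linarith [one_sub_sq_div_two_le_cos (x := π / n)]
  · calc (-1 + cos (π / n)) / (n - 1)
        ≤ (-((π / n) ^ 2 / 2 * (1 - π / n / π))) / (n - 1) := by
          gcongr
          linarith [sq_div_two_mul_one_sub_div_pi_le_one_sub_cos hx₀ hxπ]
      _ = -π ^ 2 / (2 * (n : ℝ) ^ 3) := by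
          field_simp
end

section
/- For integers n ≥ 1 and 0 ≤ j₁, k₁, j₂, k₂ < n with j₁ < k₁ and j₂ < k₂, the functions f_{j,k}(x,y) = cos(jπx/n)cos(kπy/n) − cos(jπy/n)cos(kπx/n) satisfy: the sum of f_{j₁,k₁}(x,y)·f_{j₂,k₂}(x,y) over half-integer points 1/2 ≤ x < y ≤ n−1/2 equals 0 if (j₁,k₁) ≠ (j₂,k₂), and equals (1 + [j₁=0])·n²/4 if (j₁,k₁) = (j₂,k₂). -/
/-!
Write `c_a = (cos (aπ(i + 1/2)/n))_{i < n}` for the DCT-II vectors, so that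
`f_{j,k}(i + 1/2, i' + 1/2)` is the `2 × 2` minor of `(c_j, c_k)` in the columns `i, i'`.
The product of two such minors is symmetric in `(i, i')` and vanishes for `i = i'`, so the sum
over `i < i'` is half the full double sum, which the Binet–Cauchy identity turns into the Gram
determinant `⟨c_{j₁}, c_{j₂}⟩⟨c_{k₁}, c_{k₂}⟩ - ⟨c_{j₁}, c_{k₂}⟩⟨c_{k₁}, c_{j₂}⟩`. The DCT-II
vectors are orthogonal with `‖c_0‖² = n` and `‖c_a‖² = n/2` for `0 < a < n`, because the sum of
`cos (mπ(i + 1/2)/n)` over `i < n` telescopes to `0` unless `2n ∣ m`.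
-/

/-- The function `f_{j,k}(x,y) = cos(jπx/n)cos(kπy/n) − cos(jπy/n)cos(kπx/n)`. -/
noncomputable def triEig (n j k : ℕ) (x y : ℝ) : ℝ :=
  Real.cos (j * Real.pi * x / n) * Real.cos (k * Real.pi * y / n) -
    Real.cos (j * Real.pi * y / n) * Real.cos (k * Real.pi * x / n)

open Real Finset

/-- The `a`-th DCT-II basis vector. -/
noncomputable def dctCos (n a i : ℕ) : ℝ :=
  cos (a * π * ((i : ℝ) + 1 / 2) / n)

theorem sum_range_cos_half_int_eq_zero (n : ℕ) {m : ℤ} (hm : ¬ 2 * (n : ℤ) ∣ m) :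
    ∑ i ∈ range n, cos (m * π * ((i : ℝ) + 1 / 2) / n) = 0 := by
  rcases n.eq_zero_or_pos with rfl | hn
  · simp
  have hn₀ : (n : ℝ) ≠ 0 := by positivity
  have hsin : sin (m * π / n / 2) ≠ 0 := by
    rw [Ne, sin_eq_zero_iff]
    rintro ⟨k, hk⟩
    refine hm ⟨k, ?_⟩
    field_simp at hk
    have : (m : ℝ) = ((2 * n * k : ℤ) : ℝ) := by push_cast; linarith
    exact_mod_cast this
  have hmπ : sin (m * π / 2) * cos (m * π / 2) = 0 := by
    have := sin_two_mul (m * π / 2)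
    rw [show 2 * (m * π / 2) = m * π by ring, sin_int_mul_pi] at this
    linarith
  -- with `α = mπ/n`: `sin (α/2) * ∑ cos (α(i + 1/2)) = sin (nα/2) * cos (nα/2)`, and `nα = mπ`
  have key := sin_mul_sum_cos n (m * π / n) (m * π / n / 2)
  rw [show (n - 1) * (m * π / n) / 2 + m * π / n / 2 = m * π / 2 by field_simp; ring,
    show n * (m * π / n) / 2 = m * π / 2 by field_simp, hmπ] at key
  convert (mul_eq_zero.mp key).resolve_left hsin using 3
  ring

theorem sum_range_dctCos_mul_dctCos {n a b : ℕ} (ha : a < n) (hb : b < n) :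
    ∑ i ∈ range n, dctCos n a i * dctCos n b i =
      if a = b then (if a = 0 then (n : ℝ) else n / 2) else 0 := by
  have hvanish (m : ℤ) (hm₀ : m ≠ 0) (hm : |m| < 2 * n) :
      ∑ i ∈ range n, cos (m * π * ((i : ℝ) + 1 / 2) / n) = 0 :=
    sum_range_cos_half_int_eq_zero n fun hdvd => hm₀ (Int.eq_zero_of_abs_lt_dvd hdvd hm)
  have hprod (i : ℕ) : dctCos n a i * dctCos n b i =
      (cos (((a - b : ℤ) : ℝ) * π * ((i : ℝ) + 1 / 2) / n) +
        cos (((a + b : ℤ) : ℝ) * π * ((i : ℝ) + 1 / 2) / n)) / 2 := by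
    rw [dctCos, dctCos, eq_div_iff two_ne_zero, mul_comm, ← mul_assoc, two_mul_cos_mul_cos]
    push_cast
    ring_nf
  rw [sum_congr rfl fun i _ => hprod i, ← sum_div, sum_add_distrib]
  split_ifs with hab ha₀
  · subst hab ha₀
    simp
  · subst hab
    rw [hvanish (a + a) (by omega) (by rw [abs_lt]; omega)]
    simp
  · rw [hvanish (a - b) (by omega) (by rw [abs_lt]; omega),
      hvanish (a + b) (by omega) (by rw [abs_lt]; omega)]
    simp

theorem sum_sum_eq_two_nsmul_sum_sum_ite_lt {ι M : Type*} [LinearOrder ι] [AddCommMonoid M]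
    (s : Finset ι) (g : ι → ι → M) (hsymm : ∀ i j, g i j = g j i) (hdiag : ∀ i, g i i = 0) :
    ∑ i ∈ s, ∑ j ∈ s, g i j = 2 • ∑ i ∈ s, ∑ j ∈ s, if i < j then g i j else 0 := by
  have hsplit (i j : ι) : g i j = (if i < j then g i j else 0) + (if j < i then g j i else 0) := by
    rcases lt_trichotomy i j with h | rfl | h
    · simp [h, h.not_gt]
    · simp [hdiag]
    · simp [h, h.not_gt, hsymm i j]
  rw [sum_congr rfl fun i _ => sum_congr rfl fun j _ => hsplit i j]
  simp only [sum_add_distrib, two_nsmul]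
  rw [sum_comm (f := fun i j => if j < i then g j i else 0)]

theorem binet_cauchy_identity {ι R : Type*} [CommRing R] (s : Finset ι) (u v w z : ι → R) :
    ∑ i ∈ s, ∑ j ∈ s, (u i * v j - u j * v i) * (w i * z j - w j * z i) =
      2 * ((∑ i ∈ s, u i * w i) * (∑ i ∈ s, v i * z i) -
        (∑ i ∈ s, u i * z i) * (∑ i ∈ s, v i * w i)) := by
  have hexpand (i j : ι) : (u i * v j - u j * v i) * (w i * z j - w j * z i) =
      u i * w i * (v j * z j) - u i * z i * (v j * w j) - v i * w i * (u j * z j) +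
        v i * z i * (u j * w j) := by ring
  simp only [hexpand, sum_add_distrib, sum_sub_distrib, ← mul_sum, ← sum_mul]
  ring

theorem triEig_orthogonality_general (n : ℕ)
    (j₁ k₁ j₂ k₂ : ℕ) (h₁ : j₁ < k₁) (h₁n : k₁ < n) (h₂ : j₂ < k₂) (h₂n : k₂ < n) :
    (∑ i ∈ Finset.range n, ∑ i' ∈ Finset.range n,
        if i < i' then
          triEig n j₁ k₁ ((i : ℝ) + 1 / 2) ((i' : ℝ) + 1 / 2) *
            triEig n j₂ k₂ ((i : ℝ) + 1 / 2) ((i' : ℝ) + 1 / 2)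
        else 0) =
      if (j₁, k₁) = (j₂, k₂) then (1 + (if j₁ = 0 then 1 else 0)) * (n : ℝ) ^ 2 / 4
      else 0 := by
  have htriEig (j k i i' : ℕ) : triEig n j k ((i : ℝ) + 1 / 2) ((i' : ℝ) + 1 / 2) =
      dctCos n j i * dctCos n k i' - dctCos n j i' * dctCos n k i := rfl
  simp only [htriEig]
  have hdouble := sum_sum_eq_two_nsmul_sum_sum_ite_lt (range n)
    (fun i i' => (dctCos n j₁ i * dctCos n k₁ i' - dctCos n j₁ i' * dctCos n k₁ i) *
      (dctCos n j₂ i * dctCos n k₂ i' - dctCos n j₂ i' * dctCos n k₂ i))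
    (fun _ _ => by ring) (fun _ => by ring)
  rw [binet_cauchy_identity, two_nsmul] at hdouble
  rw [← mul_right_inj' (two_ne_zero (α := ℝ)), two_mul, ← hdouble,
    sum_range_dctCos_mul_dctCos (h₁.trans h₁n) (h₂.trans h₂n),
    sum_range_dctCos_mul_dctCos h₁n h₂n, sum_range_dctCos_mul_dctCos (h₁.trans h₁n) h₂n,
    sum_range_dctCos_mul_dctCos h₁n (h₂.trans h₂n)]
  simp only [Prod.mk.injEq]
  split_ifs <;> first | omega | ring

theorem triEig_orthogonality (n : ℕ) (hn : 1 ≤ n)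
    (j₁ k₁ j₂ k₂ : ℕ) (h₁ : j₁ < k₁) (h₁n : k₁ < n) (h₂ : j₂ < k₂) (h₂n : k₂ < n) :
    (∑ i ∈ Finset.range n, ∑ i' ∈ Finset.range n,
        if i < i' then
          triEig n j₁ k₁ ((i : ℝ) + 1 / 2) ((i' : ℝ) + 1 / 2) *
            triEig n j₂ k₂ ((i : ℝ) + 1 / 2) ((i' : ℝ) + 1 / 2)
        else 0) =
      if (j₁, k₁) = (j₂, k₂) then (1 + (if j₁ = 0 then 1 else 0)) * (n : ℝ) ^ 2 / 4
      else 0 :=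
  triEig_orthogonality_general n j₁ k₁ j₂ k₂ h₁ h₁n h₂ h₂n
end

section
/- For any integer n ≥ 2 and any integer j with 1 ≤ j ≤ n, cos(jπ/n) ≤ 1 − j·(1 − cos(π/n)). -/
/-! The identity for `cos (a + b) + 1 - cos a - cos b` shows that `1 - cos` is superadditive on
`[0, π]`, so `j * (1 - cos x) ≤ 1 - cos (j * x)` whenever `j * x ≤ π`; take `x = π / n`. -/

open Real

lemma Real.cos_add_add_one_sub_cos_sub_cos (a b : ℝ) :
    cos (a + b) + 1 - cos a - cos b = -4 * sin (a / 2) * sin (b / 2) * cos ((a + b) / 2) := by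
  have h2 : ∀ t : ℝ, t = 2 * (t / 2) := fun t => by ring
  rw [h2 a, h2 b, ← mul_add, cos_two_mul, cos_two_mul, cos_two_mul]
  simp only [mul_div_cancel_left₀ _ (two_ne_zero' ℝ), cos_add]
  linear_combination
    (2 * cos (a / 2) ^ 2 - 2) * sin_sq_add_cos_sq (b / 2) - 2 * sin (b / 2) ^ 2 * sin_sq_add_cos_sq (a / 2)

lemma Real.cos_add_le_cos_add_cos_sub_one {a b : ℝ} (ha : 0 ≤ a) (hb : 0 ≤ b) (hab : a + b ≤ π) :
    cos (a + b) ≤ cos a + cos b - 1 := by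
  have hsa : 0 ≤ sin (a / 2) := sin_nonneg_of_nonneg_of_le_pi (by linarith) (by linarith)
  have hsb : 0 ≤ sin (b / 2) := sin_nonneg_of_nonneg_of_le_pi (by linarith) (by linarith)
  have hc : 0 ≤ cos ((a + b) / 2) := cos_nonneg_of_mem_Icc ⟨by linarith [pi_pos], by linarith⟩
  have := cos_add_add_one_sub_cos_sub_cos a b
  linarith [mul_nonneg (mul_nonneg hsa hsb) hc]

lemma Real.nat_mul_one_sub_cos_le {x : ℝ} (hx : 0 ≤ x) {j : ℕ} (hj : j * x ≤ π) :
    j * (1 - cos x) ≤ 1 - cos (j * x) := by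
  induction j with
  | zero => simp
  | succ k ih =>
    push_cast at hj ⊢
    have hkx : k * x ≤ π := by linarith
    have := cos_add_le_cos_add_cos_sub_one (by positivity) hx (by linarith : k * x + x ≤ π)
    simp only [add_one_mul]
    linarith [ih hkx]

theorem cos_chord_bound_general (n : ℕ) (j : ℕ) (hjn : j ≤ n) :
    Real.cos (j * Real.pi / n) ≤ 1 - (j : ℝ) * (1 - Real.cos (Real.pi / n)) := by
  have hjπ : (j : ℝ) * (π / n) ≤ π := by
    rcases n.eq_zero_or_pos with rfl | hn
    · simp [pi_nonneg]
    · rw [← mul_div_assoc, div_le_iff₀ (by positivity), mul_comm π]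
      exact mul_le_mul_of_nonneg_right (by exact_mod_cast hjn) pi_nonneg
  rw [mul_div_assoc]
  linarith [Real.nat_mul_one_sub_cos_le (by positivity) hjπ]

theorem cos_chord_bound (n : ℕ) (hn : 2 ≤ n) (j : ℕ) (hj1 : 1 ≤ j) (hjn : j ≤ n) :
    Real.cos (j * Real.pi / n) ≤ 1 - (j : ℝ) * (1 - Real.cos (Real.pi / n)) :=
  cos_chord_bound_general n j hjn
end

section
/- Let P be the transition matrix of a reversible, irreducible, aperiodic Markov chain on a finite state space equipped with a partial order having minimum 0̂ and maximum 1̂, admitting a monotone grand coupling. Suppose Φ is a strictly increasing real function on the state space such that whenever X ⪯ Y, the coupled one-step evolution satisfies E[Φ(Y′) − Φ(X′) | X, Y] ≤ (1−γ)(Φ(Y)−Φ(X)) for some 0 < γ < 1. Then every eigenvalue λ of P other than 1 satisfies λ ≤ 1−γ; i.e., the spectral gap of P is at least γ. -/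
/-!
Let `v` be an eigenvector for `lam ≠ 1`. It is not constant, and since every state lies above
`⊥`, it differs at some pair `a < b`; replacing `v` by `-v` we may assume `v a < v b`. Take the
comparable pair `a₀ < b₀` maximising the slope `M = (v b₀ - v a₀) / (Φ b₀ - Φ a₀)`, so that
`v u' - v u ≤ M (Φ u' - Φ u)` whenever `u ≤ u'`. One step of the monotone coupling from
`a₀ ≤ b₀` gives
`lam (v b₀ - v a₀) = E[v (F b₀) - v (F a₀)] ≤ M E[Φ (F b₀) - Φ (F a₀)] ≤ (1 - γ) (v b₀ - v a₀)`.

The marginals only prescribe the outer measures of the fibres `{ω | F ω x = y}`; as these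
partition `Ω` and their measures add up to `1`, each fibre is null-measurable, which is what
makes the expectations computable.
-/

open MeasureTheory Matrix

namespace MeasureTheory

variable {Ω : Type*} [MeasurableSpace Ω] {μ : Measure Ω} [IsFiniteMeasure μ]

theorem nullMeasurableSet_of_measureReal_add_compl_le {s : Set Ω}
    (h : μ.real s + μ.real sᶜ ≤ μ.real Set.univ) : NullMeasurableSet s μ := by
  set t := toMeasurable μ s
  have ht : MeasurableSet t := measurableSet_toMeasurable μ s
  have hst : s ⊆ t := subset_toMeasurable μ s
  have hμt : μ.real t = μ.real s := by simp only [Measure.real, t, measure_toMeasurable]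
  have hsplit : μ.real (sᶜ ∩ t) + μ.real tᶜ = μ.real sᶜ := by
    rw [← Set.inter_eq_right.mpr (Set.compl_subset_compl.mpr hst), ← Set.sdiff_eq]
    exact measureReal_inter_add_sdiff ht
  have hgap : μ.real (sᶜ ∩ t) = 0 := by
    have := measureReal_add_measureReal_compl (μ := μ) ht
    linarith [measureReal_nonneg (μ := μ) (s := sᶜ ∩ t)]
  refine ht.nullMeasurableSet.congr (ae_eq_set.mpr ⟨?_, ?_⟩).symm
  · rw [Set.sdiff_eq_empty.mpr hst, measure_empty]
  · rw [Set.sdiff_eq, Set.inter_comm]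
    exact (measureReal_eq_zero_iff).mp hgap

variable {α : Type*} [Fintype α]

theorem nullMeasurableSet_preimage_singleton_of_sum_le {T : Ω → α}
    (h : ∑ z, μ.real (T ⁻¹' {z}) ≤ μ.real Set.univ) (z : α) :
    NullMeasurableSet (T ⁻¹' {z}) μ := by
  classical
  refine nullMeasurableSet_of_measureReal_add_compl_le (le_trans ?_ h)
  have hcompl : (T ⁻¹' {z})ᶜ = ⋃ w ∈ Finset.univ.erase z, T ⁻¹' {w} := by
    ext ω; simp [eq_comm]
  rw [hcompl, ← Finset.add_sum_erase _ _ (Finset.mem_univ z)]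
  gcongr
  exact measureReal_biUnion_finset_le _ _

theorem integral_comp_eq_sum_measureReal_preimage {T : Ω → α}
    (hT : ∀ z, NullMeasurableSet (T ⁻¹' {z}) μ) (g : α → ℝ) :
    Integrable (fun ω => g (T ω)) μ ∧ ∫ ω, g (T ω) ∂μ = ∑ z, μ.real (T ⁻¹' {z}) * g z := by
  classical
  have hdecomp : (fun ω => g (T ω)) = fun ω => ∑ z, (T ⁻¹' {z}).indicator (fun _ => g z) ω := by
    ext ω
    simp [Set.indicator_apply, eq_comm]
  have hint : ∀ z, Integrable ((T ⁻¹' {z}).indicator fun _ => g z) μ :=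
    fun z => (integrable_const (g z)).indicator₀ (hT z)
  rw [hdecomp]
  refine ⟨integrable_finsetSum _ fun z _ => hint z, ?_⟩
  rw [integral_finsetSum _ fun z _ => hint z]
  refine Finset.sum_congr rfl fun z _ => ?_
  rw [integral_indicator₀ (hT z), setIntegral_const, smul_eq_mul]

end MeasureTheory

section Coupling

variable {α : Type*} [Fintype α] {Ω : Type*} [MeasurableSpace Ω] {μ : Measure Ω}
  [IsProbabilityMeasure μ] {P : Matrix α α ℝ} {F : Ω → α → α}

theorem integral_comp_coupling_eq_mulVec (hP1 : ∀ x, ∑ y, P x y = 1)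
    (hFmarg : ∀ x y, (μ {ω | F ω x = y}).toReal = P x y) (x : α) (g : α → ℝ) :
    Integrable (fun ω => g (F ω x)) μ ∧ ∫ ω, g (F ω x) ∂μ = (P *ᵥ g) x := by
  have hfiber : ∀ z, μ.real ((F · x) ⁻¹' {z}) = P x z := hFmarg x
  have hnull := nullMeasurableSet_preimage_singleton_of_sum_le (μ := μ) (T := (F · x))
    (by simp only [hfiber, hP1, probReal_univ, le_refl])
  obtain ⟨hint, heq⟩ := integral_comp_eq_sum_measureReal_preimage hnull g
  exact ⟨hint, by simp only [heq, hfiber, mulVec, dotProduct]⟩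

end Coupling

theorem exists_max_slope {α : Type*} [Finite α] [PartialOrder α] {Φ w : α → ℝ}
    (hΦ : StrictMono Φ) {a b : α} (hab : a < b) (hw : w a < w b) :
    ∃ M > 0, ∃ a₀ b₀, a₀ < b₀ ∧ w b₀ - w a₀ = M * (Φ b₀ - Φ a₀) ∧
      ∀ u u', u ≤ u' → w u' - w u ≤ M * (Φ u' - Φ u) := by
  classical
  have := Fintype.ofFinite α
  let slope : α × α → ℝ := fun q => (w q.2 - w q.1) / (Φ q.2 - Φ q.1)
  have hpairs : (Finset.univ.filter fun q : α × α => q.1 < q.2).Nonempty :=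
    ⟨(a, b), by simpa using hab⟩
  obtain ⟨⟨a₀, b₀⟩, hq₀, hmax⟩ := Finset.exists_max_image _ slope hpairs
  simp only [Finset.mem_filter, Finset.mem_univ, true_and, Prod.forall] at hq₀ hmax
  have hslope : ∀ {u u'}, u < u' → w u' - w u = slope (u, u') * (Φ u' - Φ u) := fun h =>
    (div_mul_cancel₀ _ (sub_pos.mpr (hΦ h)).ne').symm
  refine ⟨slope (a₀, b₀), ?_, a₀, b₀, hq₀, hslope hq₀, fun u u' huu' => ?_⟩
  · exact (div_pos (sub_pos.mpr hw) (sub_pos.mpr (hΦ hab))).trans_le (hmax a b hab)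
  · rcases huu'.eq_or_lt with rfl | hlt
    · simp
    · rw [hslope hlt]
      exact mul_le_mul_of_nonneg_right (hmax u u' hlt) (sub_pos.mpr (hΦ hlt)).le

theorem exists_apply_ne_of_mulVec_eq_smul {α : Type*} [Fintype α] {P : Matrix α α ℝ}
    (hP1 : ∀ x, ∑ y, P x y = 1) {v : α → ℝ} {lam : ℝ} (hv0 : v ≠ 0)
    (hv : P *ᵥ v = lam • v) (hlam : lam ≠ 1) : ∃ x y, v x ≠ v y := by
  by_contra! hconst
  have hfix : P *ᵥ v = v := by
    ext x
    simp only [mulVec, dotProduct, hconst _ x, ← Finset.sum_mul, hP1, one_mul]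
  have : (lam - 1) • v = 0 := by rw [sub_smul, one_smul, ← hv, hfix, sub_self]
  exact hv0 ((smul_eq_zero.mp this).resolve_left (sub_ne_zero.mpr hlam))

theorem exists_lt_apply_ne_of_apply_ne {α β : Type*} [PartialOrder α] [OrderBot α]
    {v : α → β} {x y : α} (h : v x ≠ v y) : ∃ a b, a < b ∧ v a ≠ v b := by
  have from_bot : ∀ z, v ⊥ ≠ v z → ∃ a b, a < b ∧ v a ≠ v b := fun z hz =>
    ⟨⊥, z, bot_lt_iff_ne_bot.mpr (by rintro rfl; exact hz rfl), hz⟩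
  by_cases hx : v ⊥ = v x
  · exact from_bot y (hx ▸ h)
  · exact from_bot x hx

section Contraction

variable {α : Type*} [Fintype α] [PartialOrder α] {Ω : Type*} [MeasurableSpace Ω]
  {μ : Measure Ω} [IsProbabilityMeasure μ] {P : Matrix α α ℝ} {F : Ω → α → α}
  {Φ : α → ℝ} {γ : ℝ}

theorem le_one_sub_of_mulVec_eq_smul_of_lt (hP1 : ∀ x, ∑ y, P x y = 1)
    (hFmarg : ∀ x y, (μ {ω | F ω x = y}).toReal = P x y) (hFmono : ∀ ω, Monotone (F ω))
    (hΦ : StrictMono Φ)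
    (hcontr : ∀ x y, x ≤ y → ∫ ω, (Φ (F ω y) - Φ (F ω x)) ∂μ ≤ (1 - γ) * (Φ y - Φ x))
    {lam : ℝ} {w : α → ℝ} (hw : P *ᵥ w = lam • w) {a b : α} (hab : a < b)
    (hwab : w a < w b) : lam ≤ 1 - γ := by
  obtain ⟨M, hM, a₀, b₀, hlt, hslope, hlip⟩ := exists_max_slope hΦ hab hwab
  have hE := integral_comp_coupling_eq_mulVec hP1 hFmarg
  have hdrift : ∫ ω, (w (F ω b₀) - w (F ω a₀)) ∂μ = lam * (w b₀ - w a₀) := by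
    rw [integral_sub (hE b₀ w).1 (hE a₀ w).1, (hE b₀ w).2, (hE a₀ w).2, hw]
    simp only [Pi.smul_apply, smul_eq_mul, mul_sub]
  have hbound : ∫ ω, (w (F ω b₀) - w (F ω a₀)) ∂μ ≤ M * ((1 - γ) * (Φ b₀ - Φ a₀)) :=
    calc ∫ ω, (w (F ω b₀) - w (F ω a₀)) ∂μ
        ≤ ∫ ω, M * (Φ (F ω b₀) - Φ (F ω a₀)) ∂μ :=
          integral_mono ((hE b₀ w).1.sub (hE a₀ w).1)
            (((hE b₀ Φ).1.sub (hE a₀ Φ).1).const_mul M)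
            fun ω => hlip _ _ (hFmono ω hlt.le)
      _ = M * ∫ ω, (Φ (F ω b₀) - Φ (F ω a₀)) ∂μ := integral_const_mul _ _
      _ ≤ M * ((1 - γ) * (Φ b₀ - Φ a₀)) :=
          mul_le_mul_of_nonneg_left (hcontr _ _ hlt.le) hM.le
  rw [hdrift, hslope] at hbound
  exact le_of_mul_le_mul_right (by linarith) (mul_pos hM (sub_pos.mpr (hΦ hlt)))

end Contraction

theorem spectral_gap_from_monotone_contraction_general
    {α : Type*} [Fintype α] [PartialOrder α] [BoundedOrder α]
    (P : Matrix α α ℝ)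
    -- `P` is a stochastic matrix
    (hP1 : ∀ x, ∑ y, P x y = 1)
    -- a monotone grand coupling with one-step marginals given by `P`
    {Ω : Type*} [mΩ : MeasurableSpace Ω] (μ : Measure Ω) [IsProbabilityMeasure μ]
    (F : Ω → α → α)
    (hFmarg : ∀ x y, (μ {ω | F ω x = y}).toReal = P x y)
    (hFmono : ∀ ω, Monotone (F ω))
    -- a strictly increasing function contracting at rate `1 − γ` under the coupling
    (Φ : α → ℝ) (hΦ : StrictMono Φ)
    (γ : ℝ)
    (hcontr : ∀ x y, x ≤ y →
      ∫ ω, (Φ (F ω y) - Φ (F ω x)) ∂μ ≤ (1 - γ) * (Φ y - Φ x)) :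
    ∀ lam : ℝ, (∃ v : α → ℝ, v ≠ 0 ∧ P.mulVec v = lam • v) → lam = 1 ∨ lam ≤ 1 - γ := by
  rintro lam ⟨v, hv0, hv⟩
  rcases eq_or_ne lam 1 with hlam | hlam
  · exact Or.inl hlam
  right
  obtain ⟨x, y, hxy⟩ := exists_apply_ne_of_mulVec_eq_smul hP1 hv0 hv hlam
  obtain ⟨a, b, hab, hvab⟩ := exists_lt_apply_ne_of_apply_ne hxy
  have bound := fun (w : α → ℝ) (hw : P *ᵥ w = lam • w) =>
    le_one_sub_of_mulVec_eq_smul_of_lt hP1 hFmarg hFmono hΦ hcontr hw hab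
  rcases hvab.lt_or_gt with h | h
  · exact bound v hv h
  · exact bound (-v) (by rw [mulVec_neg, hv, smul_neg]) (neg_lt_neg h)

/-- If a reversible, irreducible, aperiodic finite Markov chain on a partially ordered
state space with bottom and top admits a monotone grand coupling under which a strictly
increasing function `Φ` contracts by a factor `1 − γ`, then every eigenvalue of the
transition matrix other than `1` is at most `1 − γ`. -/
theorem spectral_gap_from_monotone_contraction
    {α : Type*} [Fintype α] [MeasurableSpace α] [DecidableEq α] [PartialOrder α] [BoundedOrder α]
    (P : Matrix α α ℝ)
    -- `P` is a stochastic matrix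
    (hP0 : ∀ x y, 0 ≤ P x y) (hP1 : ∀ x, ∑ y, P x y = 1)
    -- irreducibility and aperiodicity (primitivity)
    (hprim : ∃ t : ℕ, ∀ x y, 0 < (P ^ t) x y)
    -- reversibility with respect to a positive stationary distribution
    (pi : α → ℝ) (hpipos : ∀ x, 0 < pi x) (hpi1 : ∑ x, pi x = 1)
    (hrev : ∀ x y, pi x * P x y = pi y * P y x)
    -- a monotone grand coupling with one-step marginals given by `P`
    {Ω : Type*} [mΩ : MeasurableSpace Ω] (μ : Measure Ω) [IsProbabilityMeasure μ]
    (F : Ω → α → α)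
    (hFmeas : ∀ x, Measurable fun ω => F ω x)
    (hFmarg : ∀ x y, (μ {ω | F ω x = y}).toReal = P x y)
    (hFmono : ∀ ω, Monotone (F ω))
    -- a strictly increasing function contracting at rate `1 − γ` under the coupling
    (Φ : α → ℝ) (hΦ : StrictMono Φ)
    (γ : ℝ) (hγ0 : 0 < γ) (hγ1 : γ < 1)
    (hcontr : ∀ x y, x ≤ y →
      ∫ ω, (Φ (F ω y) - Φ (F ω x)) ∂μ ≤ (1 - γ) * (Φ y - Φ x)) :
    ∀ lam : ℝ, (∃ v : α → ℝ, v ≠ 0 ∧ P.mulVec v = lam • v) → lam = 1 ∨ lam ≤ 1 - γ :=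
  spectral_gap_from_monotone_contraction_general P hP1 (mΩ := mΩ) μ F hFmarg hFmono Φ hΦ γ hcontr
end
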